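/- Let q be an indeterminate, a₁,…,aₙ positive integers, σ = ∑aᵢ, σᵢ = ∑_{j<i}a_j, F as in the q-Dyson setup, and Aᵢ = {1,q,…,q^{σ−aᵢ}}. Then the coefficient of ∏ᵢ xᵢ^{σ−aᵢ} in F equals F(q^{σ₁},…,q^{σₙ})/∏ᵢ φᵢ'(q^{σᵢ}), where φᵢ(z) = ∏_{a∈Aᵢ}(z−a). -/

import Mathlib

open Finset MvPolynomial

/-- The homogeneous polynomial form of the q-Dyson product:
`F = ∏_{i<j} [∏_{t=0}^{aᵢ-1}(x_j - xᵢ qᵗ) · ∏_{t=1}^{a_j}(xᵢ - x_j qᵗ)]`. -/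
noncomputable def qDysonPoly (n : ℕ) (a : Fin n → ℕ) : MvPolynomial (Fin n) (RatFunc ℚ) :=
  ∏ p ∈ Finset.univ.filter (fun p : Fin n × Fin n => p.1 < p.2),
    ((∏ t ∈ Finset.range (a p.1), (X p.2 - C ((RatFunc.X : RatFunc ℚ) ^ t) * X p.1)) *
     (∏ t ∈ Finset.range (a p.2), (X p.1 - C ((RatFunc.X : RatFunc ℚ) ^ (t + 1)) * X p.2)))

/-- The grid polynomial `φᵢ(z) = (z - 1)(z - q)⋯(z - q^{σ-aᵢ})` for the grid
`Aᵢ = {1, q, …, q^{σ-aᵢ}}`. -/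
noncomputable def gridPoly (n : ℕ) (a : Fin n → ℕ) (i : Fin n) : Polynomial (RatFunc ℚ) :=
  ∏ t ∈ Finset.range ((∑ j, a j) - a i + 1),
    (Polynomial.X - Polynomial.C ((RatFunc.X : RatFunc ℚ) ^ t))

/-!
Expanding `F` into monomials and summing each over the grid `A₁ × ⋯ × Aₙ` reduces the
coefficient formula to the one-variable identity `∑_{x ∈ A} x^k / φ'(x) = [k = |A| - 1]` for
`k < |A|`, which reads off the leading coefficient of the Lagrange interpolant of `x^k`.

For the collapse, `F(q^{β₁}, …, q^{βₙ}) ≠ 0` says that for `i < j` the interval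
`[βᵢ, βᵢ + aᵢ)` lies to the left of `[β_j, β_j + a_j)`, or to its right with a gap between them.
On the grid these intervals sit inside `[0, σ)` and have total length `σ`, so they tile it;
a tiling leaves no room for gaps, forcing the intervals into index order, i.e. `βᵢ = σᵢ`.
-/

namespace Lagrange
open Polynomial

variable {K : Type*} [Field K] [DecidableEq K]

theorem sum_pow_div_eval_derivative_nodal (s : Finset K) {k : ℕ} (hk : k < #s) :
    ∑ x ∈ s, x ^ k / (derivative (nodal s id)).eval x = if k = #s - 1 then 1 else 0 := by
  have hdeg : ((X : K[X]) ^ k).degree < #s := (degree_X_pow_le k).trans_lt (by exact_mod_cast hk)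
  have h := coeff_eq_sum (v := id) (Set.injOn_id _) hdeg
  rw [Polynomial.coeff_X_pow] at h
  simp only [eq_comm (a := k), h]
  refine sum_congr rfl fun x hx => ?_
  rw [show x = id x from rfl, eval_nodal_derivative_eval_node_eq hx, eval_nodal]
  simp

end Lagrange

namespace MvPolynomial
open Polynomial Lagrange

variable {K : Type*} [Field K] [DecidableEq K]

theorem sum_piFinset_prod_pow_div_eval_derivative_nodal {σ : Type*} [Fintype σ]
    [DecidableEq σ] (A : σ → Finset K) (hA : ∀ i, (A i).Nonempty) (e : σ →₀ ℕ)
    (he : ∑ i, e i ≤ ∑ i, (#(A i) - 1)) :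
    ∑ c ∈ Fintype.piFinset A, ∏ i, c i ^ e i / (derivative (nodal (A i) id)).eval (c i) =
      if e = Finsupp.equivFunOnFinite.symm (fun i => #(A i) - 1) then 1 else 0 := by
  set d : σ →₀ ℕ := Finsupp.equivFunOnFinite.symm fun i => #(A i) - 1
  have hd : ∀ i, d i = #(A i) - 1 := fun _ => rfl
  have hd_lt : ∀ i, d i < #(A i) := fun i => Nat.sub_lt (hA i).card_pos one_pos
  rw [← prod_univ_sum A fun i x => x ^ e i / (derivative (nodal (A i) id)).eval x]
  split_ifs with hed
  · subst hed
    exact prod_eq_one fun i _ => by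
      rw [sum_pow_div_eval_derivative_nodal _ (hd_lt i), if_pos (hd i)]
  · obtain ⟨j, hj⟩ : ∃ j, e j < d j := by
      by_contra! hle
      have hsum : ∑ i, d i = ∑ i, e i := le_antisymm (sum_le_sum fun i _ => hle i) he
      exact hed (Finsupp.ext fun i =>
        ((sum_eq_sum_iff_of_le fun i _ => hle i).mp hsum i (mem_univ i)).symm)
    refine prod_eq_zero (mem_univ j) ?_
    rw [sum_pow_div_eval_derivative_nodal _ (hj.trans (hd_lt j)), if_neg (by rw [← hd]; omega)]

theorem coeff_eq_sum_eval_div_derivative_nodal {σ : Type*} [Fintype σ] [DecidableEq σ]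
    (A : σ → Finset K) (hA : ∀ i, (A i).Nonempty) (f : MvPolynomial σ K)
    (hf : f.totalDegree ≤ ∑ i, (#(A i) - 1)) :
    f.coeff (Finsupp.equivFunOnFinite.symm fun i => #(A i) - 1) =
      ∑ c ∈ Fintype.piFinset A, eval c f / ∏ i, (derivative (nodal (A i) id)).eval (c i) := by
  set d : σ →₀ ℕ := Finsupp.equivFunOnFinite.symm fun i => #(A i) - 1
  calc f.coeff d = ∑ e ∈ f.support, f.coeff e * if e = d then 1 else 0 := by
        simp only [mul_ite, mul_one, mul_zero, sum_ite_eq', mem_support_iff]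
        split_ifs with h <;> simp_all
    _ = ∑ e ∈ f.support, f.coeff e * ∑ c ∈ Fintype.piFinset A,
          ∏ i, c i ^ e i / (derivative (nodal (A i) id)).eval (c i) :=
        sum_congr rfl fun e he => by
          rw [sum_piFinset_prod_pow_div_eval_derivative_nodal A hA e
            (by simpa [Finsupp.sum_fintype] using (le_totalDegree he).trans hf)]
    _ = _ := by
        simp_rw [mul_sum]
        rw [sum_comm]
        refine sum_congr rfl fun c _ => ?_
        rw [eval_eq', sum_div]
        simp_rw [prod_div_distrib, mul_div_assoc]

end MvPolynomial

section IntervalPacking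

variable {ι : Type*} [LinearOrder ι] {a β : ι → ℕ}

theorem pairwiseDisjoint_Ico_of_separated
    (hsep : ∀ i j, i < j → β i + a i ≤ β j ∨ β j + a j < β i) (s : Set ι) :
    s.PairwiseDisjoint fun i => Ico (β i) (β i + a i) := by
  intro i _ j _ hij
  rw [Function.onFun, disjoint_left]
  simp only [mem_Ico]
  rcases hij.lt_or_gt with h | h
  · rcases hsep i j h with h' | h' <;> omega
  · rcases hsep j i h with h' | h' <;> omega

theorem exists_mem_Ico_of_separated [Fintype ι] (hβ : ∀ i, β i + a i ≤ ∑ j, a j)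
    (hsep : ∀ i j, i < j → β i + a i ≤ β j ∨ β j + a j < β i) {p : ℕ} (hp : p < ∑ j, a j) :
    ∃ l, β l ≤ p ∧ p < β l + a l := by
  classical
  have hsub : univ.biUnion (fun i => Ico (β i) (β i + a i)) ⊆ range (∑ j, a j) := by
    intro x hx
    simp only [mem_biUnion, mem_univ, true_and, mem_Ico] at hx
    obtain ⟨i, -, hi⟩ := hx
    exact mem_range.mpr (hi.trans_le (hβ i))
  have hcard : #(range (∑ j, a j)) ≤ #(univ.biUnion fun i => Ico (β i) (β i + a i)) := by
    rw [card_biUnion (pairwiseDisjoint_Ico_of_separated hsep _)]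
    simp
  obtain ⟨l, -, hl⟩ := mem_biUnion.mp ((eq_of_subset_of_card_le hsub hcard).symm ▸ mem_range.mpr hp)
  exact ⟨l, mem_Ico.mp hl⟩

theorem strictMono_of_separated [Fintype ι] (ha : ∀ i, 0 < a i) (hβ : ∀ i, β i + a i ≤ ∑ j, a j)
    (hsep : ∀ i j, i < j → β i + a i ≤ β j ∨ β j + a j < β i) : StrictMono β := by
  classical
  intro i j hij
  by_contra! hji
  set S := univ.filter fun j => i < j ∧ β j + a j < β i
  have hS : S.Nonempty := ⟨j, by
    have := ha i
    rcases hsep i j hij with h | h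
    · omega
    · simpa [S] using ⟨hij, h⟩⟩
  -- The interval covering the point just after the rightmost interval of `S` would be in `S` too.
  obtain ⟨m, hmS, hmax⟩ := S.exists_max_image β hS
  simp only [S, mem_filter, mem_univ, true_and] at hmS
  obtain ⟨l, hl⟩ := exists_mem_Ico_of_separated hβ hsep
    (p := β m + a m) (by have := hβ i; omega)
  rcases lt_trichotomy l m with hlm | rfl | hml
  · rcases hsep l m hlm with h | h <;> omega
  · omega
  · have hl_next : β m + a m ≤ β l := by rcases hsep m l hml with h | h <;> omega
    have hlS : l ∈ S := by
      simp only [S, mem_filter, mem_univ, true_and]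
      refine ⟨hmS.1.trans hml, ?_⟩
      rcases hsep i l (hmS.1.trans hml) with h | h <;> omega
    have := hmax l hlS
    have := ha m
    omega

theorem eq_sum_Iio_of_separated [Fintype ι] [LocallyFiniteOrderBot ι] (ha : ∀ i, 0 < a i)
    (hβ : ∀ i, β i + a i ≤ ∑ j, a j)
    (hsep : ∀ i j, i < j → β i + a i ≤ β j ∨ β j + a j < β i) (i : ι) :
    β i = ∑ j ∈ Iio i, a j := by
  classical
  have hmono := strictMono_of_separated ha hβ hsep
  have hrange : range (β i) = (Iio i).biUnion fun j => Ico (β j) (β j + a j) := by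
    ext p
    simp only [mem_range, mem_biUnion, mem_Iio, mem_Ico]
    constructor
    · intro hp
      obtain ⟨l, hl⟩ := exists_mem_Ico_of_separated hβ hsep (p := p)
        (by have := hβ i; omega)
      refine ⟨l, ?_, hl⟩
      by_contra! hil
      have := hmono.monotone hil
      omega
    · rintro ⟨j, hji, hp⟩
      have := hmono hji
      rcases hsep j i hji with h | h <;> omega
  calc β i = #(range (β i)) := (card_range _).symm
    _ = ∑ j ∈ Iio i, a j := by
      rw [hrange, card_biUnion (pairwiseDisjoint_Ico_of_separated hsep _)]
      simp

end IntervalPacking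

theorem Finset.sum_filter_lt_add_eq_sum_sum_erase {ι : Type*} [Fintype ι] [LinearOrder ι]
    (a : ι → ℕ) :
    ∑ p ∈ univ.filter (fun p : ι × ι => p.1 < p.2), (a p.1 + a p.2) =
      ∑ i, ∑ j ∈ univ.erase i, a j := by
  have hswap : ∑ p ∈ univ.filter (fun p : ι × ι => p.1 < p.2), a p.1 =
      ∑ p ∈ univ.filter (fun p : ι × ι => p.2 < p.1), a p.2 :=
    sum_equiv (Equiv.prodComm ι ι) (by simp) (by simp)
  rw [sum_add_distrib, hswap, add_comm, ← sum_union (disjoint_filter.mpr fun p _ h => h.asymm),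
    ← filter_or, sum_filter, Fintype.sum_prod_type]
  refine sum_congr rfl fun i _ => ?_
  rw [← filter_ne univ i, sum_filter]
  simp only [ne_iff_lt_or_gt]

theorem Finset.sum_Iio_add_le_sum {ι M : Type*} [Fintype ι] [LinearOrder ι]
    [LocallyFiniteOrderBot ι] [AddCommMonoid M] [PartialOrder M] [CanonicallyOrderedAdd M]
    (a : ι → M) (i : ι) :
    ∑ j ∈ Iio i, a j + a i ≤ ∑ j, a j := by
  rw [add_comm, ← sum_cons (notMem_Iio_self (b := i)), ← Iic_eq_cons_Iio]
  exact sum_le_sum_of_subset (subset_univ _)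

theorem RatFunc.X_pow_injective {K : Type*} [Field K] :
    Function.Injective fun t : ℕ => (RatFunc.X : RatFunc K) ^ t := by
  intro s t h
  have h' : (Polynomial.X : Polynomial K) ^ s = Polynomial.X ^ t :=
    RatFunc.algebraMap_injective K (by simpa [← RatFunc.algebraMap_X] using h)
  simpa using congrArg Polynomial.natDegree h'

namespace MvPolynomial

variable {R σ : Type*} [CommRing R] [Nontrivial R]

theorem totalDegree_X_sub_C_mul_X_le (i j : σ) (c : R) :
    (X j - C c * X i).totalDegree ≤ 1 := by
  refine (totalDegree_sub _ _).trans (max_le (totalDegree_X j).le ?_)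
  exact (totalDegree_mul _ _).trans (by simp [totalDegree_C, totalDegree_X])

theorem totalDegree_prod_X_sub_C_mul_X_le {ι : Type*} (s : Finset ι) (i j : σ) (c : ι → R) :
    (∏ t ∈ s, (X j - C (c t) * X i)).totalDegree ≤ #s :=
  (totalDegree_finsetProd _ _).trans
    (by simpa using sum_le_sum fun t (_ : t ∈ s) => totalDegree_X_sub_C_mul_X_le i j (c t))

end MvPolynomial

theorem totalDegree_qDysonPoly_le (n : ℕ) (a : Fin n → ℕ) :
    (qDysonPoly n a).totalDegree ≤ ∑ i, ((∑ j, a j) - a i) := by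
  have hσ : ∀ i, (∑ j, a j) - a i = ∑ j ∈ univ.erase i, a j := fun i => by
    rw [← add_sum_erase _ _ (mem_univ i), Nat.add_sub_cancel_left]
  simp_rw [hσ, ← sum_filter_lt_add_eq_sum_sum_erase]
  refine (totalDegree_finsetProd _ _).trans (sum_le_sum fun p _ =>
    (totalDegree_mul _ _).trans (add_le_add ?_ ?_))
  · exact (totalDegree_prod_X_sub_C_mul_X_le _ p.1 p.2 _).trans (card_range _).le
  · exact (totalDegree_prod_X_sub_C_mul_X_le _ p.2 p.1 _).trans (card_range _).le

theorem separated_of_eval_qDysonPoly_ne_zero {n : ℕ} {a β : Fin n → ℕ}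
    (h : eval (fun i => (RatFunc.X : RatFunc ℚ) ^ β i) (qDysonPoly n a) ≠ 0) :
    ∀ i j, i < j → β i + a i ≤ β j ∨ β j + a j < β i := by
  intro i j hij
  rw [qDysonPoly, map_prod, prod_ne_zero_iff] at h
  have hpair := h (i, j) (mem_filter.mpr ⟨mem_univ _, hij⟩)
  rw [map_mul, mul_ne_zero_iff, map_prod, map_prod, prod_ne_zero_iff, prod_ne_zero_iff] at hpair
  obtain ⟨hi, hj⟩ := hpair
  simp only [map_sub, map_mul, eval_X, eval_C, mem_range, ne_eq, sub_eq_zero, ← pow_add] at hi hj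
  by_contra! hoverlap
  rcases le_or_gt (β i) (β j) with hle | hlt
  · exact hi (β j - β i) (by omega) (congrArg _ (by omega))
  · exact hj (β i - β j - 1) (by omega) (congrArg _ (by omega))

noncomputable def qDysonGrid (n : ℕ) (a : Fin n → ℕ) (i : Fin n) : Finset (RatFunc ℚ) :=
  (range ((∑ j, a j) - a i + 1)).map ⟨(RatFunc.X ^ ·), RatFunc.X_pow_injective⟩

theorem card_qDysonGrid (n : ℕ) (a : Fin n → ℕ) (i : Fin n) :
    #(qDysonGrid n a i) = (∑ j, a j) - a i + 1 := by
  rw [qDysonGrid, card_map, card_range]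

theorem gridPoly_eq_nodal_qDysonGrid (n : ℕ) (a : Fin n → ℕ) (i : Fin n) :
    gridPoly n a i = Lagrange.nodal (qDysonGrid n a i) id := by
  rw [Lagrange.nodal_eq, qDysonGrid, prod_map]
  rfl

theorem mem_piFinset_qDysonGrid (n : ℕ) (a : Fin n → ℕ) :
    (fun i => (RatFunc.X : RatFunc ℚ) ^ ∑ j ∈ Iio i, a j) ∈ Fintype.piFinset (qDysonGrid n a) :=
  Fintype.mem_piFinset.mpr fun i => mem_map_of_mem _
    (mem_range.mpr (by have := sum_Iio_add_le_sum a i; omega))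

theorem eval_qDysonPoly_eq_zero_of_mem_piFinset {n : ℕ} {a : Fin n → ℕ} (ha : ∀ i, 0 < a i)
    {c : Fin n → RatFunc ℚ} (hc : c ∈ Fintype.piFinset (qDysonGrid n a))
    (hne : c ≠ fun i => RatFunc.X ^ ∑ j ∈ Iio i, a j) :
    eval c (qDysonPoly n a) = 0 := by
  choose β hβ hβc using fun i => mem_map.mp (Fintype.mem_piFinset.mp hc i)
  obtain rfl : c = fun i => RatFunc.X ^ β i := funext fun i => (hβc i).symm
  have hβσ : ∀ i, β i + a i ≤ ∑ j, a j := fun i => by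
    have := mem_range.mp (hβ i)
    have := single_le_sum (fun j _ => (a j).zero_le) (mem_univ i)
    omega
  by_contra h
  exact hne (funext fun i => by
    rw [eq_sum_Iio_of_separated ha hβσ (separated_of_eval_qDysonPoly_ne_zero h) i])

/-- Collapse of the interpolation formula for the q-Dyson polynomial: the coefficient
of `∏ᵢ xᵢ^{σ-aᵢ}` in `F` equals `F(q^{σ₁},…,q^{σₙ}) / ∏ᵢ φᵢ'(q^{σᵢ})`, where
`σᵢ = ∑_{j<i} a_j` and `σ = ∑ a_j`. -/
theorem q_dyson_coefficient_collapse
    (n : ℕ) (a : Fin n → ℕ) (ha : ∀ i, 0 < a i) :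
    (qDysonPoly n a).coeff (Finsupp.equivFunOnFinite.symm (fun i => (∑ j, a j) - a i)) =
      MvPolynomial.eval (fun i => (RatFunc.X : RatFunc ℚ) ^ (∑ j ∈ Finset.Iio i, a j))
          (qDysonPoly n a) /
        ∏ i, Polynomial.eval ((RatFunc.X : RatFunc ℚ) ^ (∑ j ∈ Finset.Iio i, a j))
          (Polynomial.derivative (gridPoly n a i)) := by
  classical
  have hcoeff := coeff_eq_sum_eval_div_derivative_nodal (qDysonGrid n a)
    (fun i => nonempty_range_add_one.map) (qDysonPoly n a)
    (by simpa only [card_qDysonGrid, Nat.add_sub_cancel] using totalDegree_qDysonPoly_le n a)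
  simp only [card_qDysonGrid, Nat.add_sub_cancel] at hcoeff
  rw [hcoeff, sum_eq_single _
    (fun c hc hne => by rw [eval_qDysonPoly_eq_zero_of_mem_piFinset ha hc hne, zero_div])
    (fun h => absurd (mem_piFinset_qDysonGrid n a) h)]
  simp_rw [gridPoly_eq_nodal_qDysonGrid]
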